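/- Suppose the gain matrix V is irreducible. Then the SIR targets γ_1,…,γ_K are feasible, i.e., there exists p ∈ P with SIR_k(p) ≥ γ_k for every k = 1,…,K, if and only if max_{1≤n≤N} ρ(B^(n)) ≤ 1. -/

import Mathlib

open Matrix

/-- A nonnegative square matrix is irreducible. -/
def MatIrred {m : Type*} [Fintype m] (M : Matrix m m ℝ) : Prop :=
  ∀ S : Set m, S.Nonempty → S ≠ Set.univ → ∃ i ∈ S, ∃ j ∉ S, 0 < M i j

/-- Spectral radius of a real square matrix (largest modulus of a complex eigenvalue). -/
noncomputable def specRad {m : Type*} [Fintype m] [DecidableEq m] (M : Matrix m m ℝ) : ℝ :=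
  sSup ((fun w : ℂ => ‖w‖) '' spectrum ℂ (M.map fun x => (x : ℂ)))

/-- SIR of link `k` under power vector `p`. -/
noncomputable def SIR {K : ℕ} (V : Matrix (Fin K) (Fin K) ℝ) (z : Fin K → ℝ)
    (p : Fin K → ℝ) (k : Fin K) : ℝ :=
  p k / (V.mulVec p k + z k)

/-- The polytope of admissible power vectors. -/
def Pset {K N : ℕ} (C : Matrix (Fin N) (Fin K) ℝ) (phat : Fin N → ℝ) :
    Set (Fin K → ℝ) :=
  {p | (∀ k, 0 ≤ p k) ∧ ∀ n, C.mulVec p n ≤ phat n}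

/-- Admissible power vectors with all entries positive. -/
def Pplus {K N : ℕ} (C : Matrix (Fin N) (Fin K) ℝ) (phat : Fin N → ℝ) :
    Set (Fin K → ℝ) :=
  {p ∈ Pset C phat | ∀ k, 0 < p k}

/-- Normalized power-constraint functions `gₙ(p) = cₙᵀ p / Pₙ`. -/
noncomputable def gcon {K N : ℕ} (C : Matrix (Fin N) (Fin K) ℝ) (phat : Fin N → ℝ)
    (n : Fin N) (p : Fin K → ℝ) : ℝ :=
  C.mulVec p n / phat n

/-- The matrices `B⁽ⁿ⁾ = Γ (V + (1/Pₙ) z cₙᵀ)`. -/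
noncomputable def Bmat {K N : ℕ} (V : Matrix (Fin K) (Fin K) ℝ) (z : Fin K → ℝ)
    (γ : Fin K → ℝ) (C : Matrix (Fin N) (Fin K) ℝ) (phat : Fin N → ℝ) (n : Fin N) :
    Matrix (Fin K) (Fin K) ℝ :=
  Matrix.diagonal γ * (V + (phat n)⁻¹ • Matrix.vecMulVec z (C n))

/-- The extended `(K+1)×(K+1)` matrices `A⁽ⁿ⁾`. -/
noncomputable def Amat {K N : ℕ} (V : Matrix (Fin K) (Fin K) ℝ) (z : Fin K → ℝ)
    (γ : Fin K → ℝ) (C : Matrix (Fin N) (Fin K) ℝ) (phat : Fin N → ℝ) (n : Fin N) :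
    Matrix (Fin (K+1)) (Fin (K+1)) ℝ :=
  Matrix.of fun i j =>
    if hi : (i : ℕ) < K then
      if hj : (j : ℕ) < K then γ ⟨i, hi⟩ * V ⟨i, hi⟩ ⟨j, hj⟩
      else γ ⟨i, hi⟩ * z ⟨i, hi⟩
    else
      if hj : (j : ℕ) < K then (phat n)⁻¹ * ∑ k, C n k * (γ k * V k ⟨j, hj⟩)
      else (phat n)⁻¹ * ∑ k, C n k * (γ k * z k)

/-- `pbar` is a max-min SIR-balanced power vector: it maximizes
`p ↦ min_k SIR_k(p)/γ_k` over the set `P`. -/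
def MaxMinBalanced {K N : ℕ} (V : Matrix (Fin K) (Fin K) ℝ) (z : Fin K → ℝ)
    (γ : Fin K → ℝ) (C : Matrix (Fin N) (Fin K) ℝ) (phat : Fin N → ℝ)
    (pbar : Fin K → ℝ) : Prop :=
  pbar ∈ Pset C phat ∧
    ∀ p ∈ Pset C phat, (⨅ k, SIR V z p k / γ k) ≤ ⨅ k, SIR V z pbar k / γ k

/-- The set `N₀(p)` of active power constraints. -/
def activeSet {K N : ℕ} (C : Matrix (Fin N) (Fin K) ℝ) (phat : Fin N → ℝ)
    (p : Fin K → ℝ) : Set (Fin N) :=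
  {n | gcon C phat n p = 1 ∧ ∀ m, gcon C phat m p ≤ gcon C phat n p}

/-- The (relatively open) probability simplex `Π⁺_K`. -/
def PosSimplex (K : ℕ) : Set (Fin K → ℝ) :=
  {w | (∀ k, 0 < w k) ∧ ∑ k, w k = 1}

/-- The feasible QoS region `F`. -/
def QoSRegion {K N : ℕ} (V : Matrix (Fin K) (Fin K) ℝ) (z : Fin K → ℝ)
    (γ : Fin K → ℝ) (C : Matrix (Fin N) (Fin K) ℝ) (phat : Fin N → ℝ)
    (φ : ℝ → ℝ) : Set (Fin K → ℝ) :=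
  {q | ∃ p ∈ Pplus C phat, ∀ k, q k = φ (SIR V z p k / γ k)}

/-!
Feasibility forces `p > 0` and `B⁽ⁿ⁾ p ≤ p` for every `n`, and a positive vector with
`M p ≤ p` bounds the spectral radius of a nonnegative `M` by `1` (Collatz–Wielandt).
Conversely, each `B⁽ⁿ⁾` is irreducible, so by Perron–Frobenius `ρ(B⁽ⁿ⁾)` has a positive
eigenvector. For `n` maximizing `ρ(B⁽ⁿ⁾)`, the `n`-th power constraint is the tightest one on
that eigenvector, so scaling it until this constraint is active gives an admissible power vector
with `γₖ (V p + z)ₖ = ρ(B⁽ⁿ⁾) pₖ ≤ pₖ`.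
-/

section Nonnegative

variable {ι : Type*} [Fintype ι]

theorem mulVec_nonneg_of_nonneg {M : Matrix ι ι ℝ} (hM : ∀ i j, 0 ≤ M i j) {x : ι → ℝ}
    (hx : ∀ k, 0 ≤ x k) (i : ι) : 0 ≤ (M *ᵥ x) i :=
  Finset.sum_nonneg fun j _ => mul_nonneg (hM i j) (hx j)

theorem exists_gt_smul_le {μ : ℝ} {q w : ι → ℝ} (hq : ∀ k, 0 < q k)
    (h : ∀ k, μ * q k < w k) : ∃ ν, μ < ν ∧ ν • q ≤ w := by
  have hev : ∀ᶠ ν in nhdsWithin μ (Set.Ioi μ), ∀ k, ν < w k / q k :=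
    Filter.eventually_all.2 fun k => nhdsWithin_le_nhds <|
      eventually_lt_nhds ((lt_div_iff₀ (hq k)).2 (h k))
  obtain ⟨ν, hν, hμν⟩ := (hev.and self_mem_nhdsWithin).exists
  exact ⟨ν, hμν, fun k => ((lt_div_iff₀ (hq k)).1 (hν k)).le⟩

theorem MatIrred.mono {M M' : Matrix ι ι ℝ} (hM : MatIrred M)
    (h : ∀ i j, 0 < M i j → 0 < M' i j) : MatIrred M' := fun S hS hSu => by
  obtain ⟨i, hi, j, hj, hij⟩ := hM S hS hSu
  exact ⟨i, hi, j, hj, h i j hij⟩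

noncomputable def posSupport (x : ι → ℝ) : Finset ι :=
  {k | 0 < x k}

theorem mem_posSupport {x : ι → ℝ} {k : ι} : k ∈ posSupport x ↔ 0 < x k := by
  simp [posSupport]

theorem exists_pos_smul_mem_stdSimplex {q : ι → ℝ} (hq : ∀ k, 0 ≤ q k) (hq0 : q ≠ 0) :
    ∃ s : ℝ, 0 < s ∧ s • q ∈ stdSimplex ℝ ι := by
  obtain ⟨j, hj⟩ := Function.ne_iff.1 hq0
  have hsum : 0 < ∑ k, q k := (lt_of_le_of_ne (hq j) (Ne.symm hj)).trans_le
    (Finset.single_le_sum (fun k _ => hq k) (Finset.mem_univ j))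
  refine ⟨(∑ k, q k)⁻¹, inv_pos.2 hsum, fun k => mul_nonneg (inv_pos.2 hsum).le (hq k), ?_⟩
  simp only [Pi.smul_apply, smul_eq_mul, ← Finset.mul_sum, inv_mul_cancel₀ hsum.ne']

theorem le_sum_entries_of_smul_le_mulVec (hM : ∀ i j, 0 ≤ M i j) {x : ι → ℝ}
    (hx : x ∈ stdSimplex ℝ ι) {μ : ℝ} (h : μ • x ≤ M *ᵥ x) : μ ≤ ∑ i, ∑ j, M i j :=
  calc μ = ∑ k, μ * x k := by rw [← Finset.mul_sum, hx.2, mul_one]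
    _ ≤ ∑ k, ∑ j, M k j * x j := Finset.sum_le_sum fun k _ => h k
    _ ≤ ∑ k, ∑ j, M k j := Finset.sum_le_sum fun k _ => Finset.sum_le_sum fun j _ =>
      mul_le_of_le_one_right (hM k j) (mem_Icc_of_mem_stdSimplex hx j).2

/-- The Perron root of `M` is the largest first coordinate in this set; the upper bound on it
only serves compactness (`le_sum_entries_of_smul_le_mulVec`). -/
def collatzWielandtSet (M : Matrix ι ι ℝ) : Set (ℝ × (ι → ℝ)) :=
  (Set.Icc 0 (∑ i, ∑ j, M i j) ×ˢ stdSimplex ℝ ι) ∩ {x | x.1 • x.2 ≤ M *ᵥ x.2}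

theorem isCompact_collatzWielandtSet (M : Matrix ι ι ℝ) : IsCompact (collatzWielandtSet M) :=
  (isCompact_Icc.prod (isCompact_stdSimplex ℝ ι)).inter_right <|
    isClosed_le (continuous_fst.smul continuous_snd)
      (Continuous.matrix_mulVec continuous_const continuous_snd)

theorem mem_collatzWielandtSet (hM : ∀ i j, 0 ≤ M i j) {μ : ℝ} (hμ : 0 ≤ μ) {x : ι → ℝ}
    (hx : x ∈ stdSimplex ℝ ι) (h : μ • x ≤ M *ᵥ x) : (μ, x) ∈ collatzWielandtSet M :=
  ⟨⟨⟨hμ, le_sum_entries_of_smul_le_mulVec hM hx h⟩, hx⟩, h⟩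

end Nonnegative

section SpectralRadius

variable {ι : Type*} [Fintype ι] [DecidableEq ι]

theorem Matrix.mem_spectrum_iff_exists_mulVec_eq_smul {𝕜 : Type*} [Field 𝕜]
    (A : Matrix ι ι 𝕜) (μ : 𝕜) : μ ∈ spectrum 𝕜 A ↔ ∃ v ≠ 0, A *ᵥ v = μ • v := by
  rw [← Matrix.spectrum_toLin', ← Module.End.hasEigenvalue_iff_mem_spectrum]
  constructor
  · intro h
    obtain ⟨v, hv⟩ := h.exists_hasEigenvector
    exact ⟨v, hv.2, by simpa using hv.apply_eq_smul⟩
  · rintro ⟨v, hv, h⟩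
    exact Module.End.hasEigenvalue_of_hasEigenvector
      ⟨Module.End.mem_eigenspace_iff.2 (by simpa using h), hv⟩

theorem norm_le_of_mulVec_le_smul {M : Matrix ι ι ℝ} (hM : ∀ i j, 0 ≤ M i j)
    {p : ι → ℝ} (hp : ∀ k, 0 < p k) {r : ℝ} (h : M *ᵥ p ≤ r • p) {μ : ℂ}
    (hμ : μ ∈ spectrum ℂ (M.map ((↑) : ℝ → ℂ))) : ‖μ‖ ≤ r := by
  obtain ⟨v, hv, hμv⟩ := (Matrix.mem_spectrum_iff_exists_mulVec_eq_smul _ _).1 hμ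
  obtain ⟨k, hk⟩ := Function.ne_iff.1 hv
  have : Nonempty ι := ⟨k⟩
  obtain ⟨i, hi⟩ := Finite.exists_max fun k => ‖v k‖ / p k
  set t := ‖v i‖ / p i
  have hbound : ∀ j, ‖v j‖ ≤ t * p j := fun j => (div_le_iff₀ (hp j)).1 (hi j)
  have ht : 0 < t := (div_pos (norm_pos_iff.2 hk) (hp k)).trans_le (hi k)
  have key : ‖μ‖ * (t * p i) ≤ r * (t * p i) :=
    calc ‖μ‖ * (t * p i) = ‖∑ j, (M i j : ℂ) * v j‖ := by
          rw [show t * p i = ‖v i‖ from div_mul_cancel₀ _ (hp i).ne', ← norm_mul,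
            ← smul_eq_mul, ← Pi.smul_apply, ← hμv]
          rfl
      _ ≤ ∑ j, M i j * (t * p j) := by
          refine (norm_sum_le _ _).trans (Finset.sum_le_sum fun j _ => ?_)
          rw [norm_mul, Complex.norm_real, Real.norm_of_nonneg (hM i j)]
          exact mul_le_mul_of_nonneg_left (hbound j) (hM i j)
      _ = t * (M *ᵥ p) i := by
          simp only [Matrix.mulVec, dotProduct, Finset.mul_sum]
          exact Finset.sum_congr rfl fun j _ => by ring
      _ ≤ r * (t * p i) := by
          have := mul_le_mul_of_nonneg_left (h i) ht.le
          simp only [Pi.smul_apply, smul_eq_mul] at this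
          linarith
  exact le_of_mul_le_mul_right key (mul_pos ht (hp i))

theorem specRad_le_of_mulVec_le_smul {M : Matrix ι ι ℝ} (hM : ∀ i j, 0 ≤ M i j)
    {p : ι → ℝ} (hp : ∀ k, 0 < p k) {r : ℝ} (hr : 0 ≤ r) (h : M *ᵥ p ≤ r • p) :
    specRad M ≤ r :=
  Real.sSup_le (by rintro _ ⟨μ, hμ, rfl⟩; exact norm_le_of_mulVec_le_smul hM hp h hμ) hr

theorem le_specRad_of_mulVec_eq_smul {M : Matrix ι ι ℝ} {r : ℝ} (hr : 0 ≤ r) {p : ι → ℝ}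
    (hp : p ≠ 0) (h : M *ᵥ p = r • p) : r ≤ specRad M := by
  have hmem : (r : ℂ) ∈ spectrum ℂ (M.map ((↑) : ℝ → ℂ)) := by
    refine (Matrix.mem_spectrum_iff_exists_mulVec_eq_smul _ _).2
      ⟨fun k => (p k : ℂ), fun h0 => hp (funext fun k => by simpa using congrFun h0 k), ?_⟩
    ext k
    have := congrArg ((↑) : ℝ → ℂ) (congrFun h k)
    simpa [Matrix.mulVec, dotProduct] using this
  calc r = ‖(r : ℂ)‖ := by rw [Complex.norm_real, Real.norm_of_nonneg hr]
    _ ≤ specRad M :=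
      le_csSup ((Matrix.finite_spectrum _).image _).bddAbove (Set.mem_image_of_mem _ hmem)

end SpectralRadius

section PerronFrobenius

variable {ι : Type*} [Fintype ι] [DecidableEq ι] {M : Matrix ι ι ℝ}

theorem one_add_mulVec_apply (x : ι → ℝ) (k : ι) : ((1 + M) *ᵥ x) k = x k + (M *ᵥ x) k := by
  rw [Matrix.add_mulVec, Matrix.one_mulVec, Pi.add_apply]

theorem one_add_mulVec_nonneg (hM : ∀ i j, 0 ≤ M i j) {x : ι → ℝ} (hx : ∀ k, 0 ≤ x k)
    (k : ι) : 0 ≤ ((1 + M) *ᵥ x) k := by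
  rw [one_add_mulVec_apply]
  linarith [hx k, mulVec_nonneg_of_nonneg hM hx k]

theorem posSupport_subset_one_add_mulVec (hM : ∀ i j, 0 ≤ M i j) {x : ι → ℝ}
    (hx : ∀ k, 0 ≤ x k) : posSupport x ⊆ posSupport ((1 + M) *ᵥ x) := fun k hk => by
  rw [mem_posSupport, one_add_mulVec_apply] at *
  linarith [mulVec_nonneg_of_nonneg hM hx k]

theorem MatIrred.posSupport_ssubset (hM : ∀ i j, 0 ≤ M i j) (hirr : MatIrred M) {x : ι → ℝ}
    (hx : ∀ k, 0 ≤ x k) (hne : (posSupport x).Nonempty) (hnu : posSupport x ≠ Finset.univ) :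
    posSupport x ⊂ posSupport ((1 + M) *ᵥ x) := by
  obtain ⟨i₀, -, hi₀⟩ := Finset.exists_mem_notMem_of_card_lt_card
    (Finset.card_lt_card (Finset.ssubset_univ_iff.2 hnu))
  obtain ⟨j₀, hj₀⟩ := hne
  obtain ⟨i, hi, j, hj, hij⟩ := hirr {k | k ∉ posSupport x} ⟨i₀, hi₀⟩
    (fun h => (h ▸ Set.mem_univ j₀ : j₀ ∈ {k | k ∉ posSupport x}) hj₀)
  have hi : ¬ 0 < x i := mem_posSupport.not.1 hi
  have hj : 0 < x j := mem_posSupport.1 (not_not.1 hj)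
  refine (Finset.ssubset_iff_of_subset (posSupport_subset_one_add_mulVec hM hx)).2
    ⟨i, ?_, mem_posSupport.not.2 hi⟩
  have : M i j * x j ≤ (M *ᵥ x) i :=
    Finset.single_le_sum (f := fun k => M i k * x k)
      (fun k _ => mul_nonneg (hM i k) (hx k)) (Finset.mem_univ j)
  rw [mem_posSupport, one_add_mulVec_apply]
  nlinarith [hx i]

theorem MatIrred.pow_mulVec_pos_of_card_le (hM : ∀ i j, 0 ≤ M i j) (hirr : MatIrred M) :
    ∀ (n : ℕ) {x : ι → ℝ}, (∀ k, 0 ≤ x k) → (posSupport x).Nonempty →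
      Fintype.card ι ≤ n + (posSupport x).card → ∀ k, 0 < ((1 + M) ^ n *ᵥ x) k
  | 0, x, _, _, hcard, k => by
    have : posSupport x = Finset.univ :=
      Finset.eq_univ_of_card _ (le_antisymm (Finset.card_le_univ _) (by omega))
    simp [← mem_posSupport, this]
  | n + 1, x, hx, hne, hcard, k => by
    rw [pow_succ, ← Matrix.mulVec_mulVec]
    have hsub := posSupport_subset_one_add_mulVec hM hx
    refine hirr.pow_mulVec_pos_of_card_le hM n (one_add_mulVec_nonneg hM hx) (hne.mono hsub) ?_ k
    by_cases hnu : posSupport x = Finset.univ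
    · rw [hnu, Finset.univ_subset_iff] at hsub
      rw [hsub, Finset.card_univ]
      omega
    · have := Finset.card_lt_card (hirr.posSupport_ssubset hM hx hne hnu)
      omega

theorem MatIrred.pow_card_mulVec_pos (hM : ∀ i j, 0 ≤ M i j) (hirr : MatIrred M) {x : ι → ℝ}
    (hx : ∀ k, 0 ≤ x k) (hx0 : x ≠ 0) (k : ι) : 0 < ((1 + M) ^ Fintype.card ι *ᵥ x) k := by
  obtain ⟨j, hj⟩ := Function.ne_iff.1 hx0
  exact hirr.pow_mulVec_pos_of_card_le hM _ hx
    ⟨j, mem_posSupport.2 (lt_of_le_of_ne (hx j) (Ne.symm hj))⟩ (by omega) k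

theorem one_add_pow_mulVec_of_mulVec_eq_smul {p : ι → ℝ} {r : ℝ} (h : M *ᵥ p = r • p) (n : ℕ) :
    (1 + M) ^ n *ᵥ p = (1 + r) ^ n • p := by
  induction n with
  | zero => simp
  | succ n ih =>
    rw [pow_succ, ← Matrix.mulVec_mulVec, Matrix.add_mulVec, Matrix.one_mulVec, h,
      show p + r • p = (1 + r) • p by rw [add_smul, one_smul], Matrix.mulVec_smul, ih,
      smul_smul, ← pow_succ']

/-- Perron–Frobenius: maximizing `r` over `collatzWielandtSet M` gives an eigenvector, because a
defect `M p - r p ≥ 0, ≠ 0` would be spread to a positive vector by `(1 + M) ^ card ι`, allowing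
a larger `r`. -/
theorem MatIrred.exists_perron_root [Nonempty ι] (hM : ∀ i j, 0 ≤ M i j) (hirr : MatIrred M) :
    ∃ r : ℝ, 0 ≤ r ∧ ∃ p : ι → ℝ, (∀ k, 0 < p k) ∧ M *ᵥ p = r • p ∧
      ∀ (μ : ℝ) (q : ι → ℝ), (∀ k, 0 ≤ q k) → q ≠ 0 → μ • q ≤ M *ᵥ q → μ ≤ r := by
  obtain ⟨i⟩ := ‹Nonempty ι›
  have hmem : (0, Pi.single i 1) ∈ collatzWielandtSet M :=
    mem_collatzWielandtSet hM le_rfl (single_mem_stdSimplex ℝ i)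
      (by rw [zero_smul]; exact mulVec_nonneg_of_nonneg hM (single_mem_stdSimplex ℝ i).1)
  obtain ⟨⟨r, p⟩, ⟨⟨⟨hr, -⟩, hp⟩, hrp⟩, hmax⟩ :=
    (isCompact_collatzWielandtSet M).exists_isMaxOn ⟨_, hmem⟩ continuous_fst.continuousOn
  have hcw : ∀ (μ : ℝ) (q : ι → ℝ), (∀ k, 0 ≤ q k) → q ≠ 0 → μ • q ≤ M *ᵥ q → μ ≤ r := by
    intro μ q hq hq0 hμq
    rcases le_or_gt μ 0 with hμ | hμ
    · exact hμ.trans hr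
    obtain ⟨s, hs, hsq⟩ := exists_pos_smul_mem_stdSimplex hq hq0
    refine hmax (mem_collatzWielandtSet hM hμ.le hsq ?_)
    rw [Matrix.mulVec_smul, smul_comm]
    exact smul_le_smul_of_nonneg_left hμq hs.le
  have hp0 : p ≠ 0 := fun h => by simpa [h] using hp.2
  set P := (1 + M) ^ Fintype.card ι
  have hPp : ∀ k, 0 < (P *ᵥ p) k := hirr.pow_card_mulVec_pos hM hp.1 hp0
  have heig : M *ᵥ p = r • p := by
    by_contra hneq
    have hy : ∀ k, 0 ≤ (M *ᵥ p - r • p) k := fun k => sub_nonneg.2 (hrp k)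
    have hPy := hirr.pow_card_mulVec_pos hM hy (sub_ne_zero.2 hneq)
    have hMP : M *ᵥ (P *ᵥ p) = r • (P *ᵥ p) + P *ᵥ (M *ᵥ p - r • p) := by
      have hcomm : M * P = P * M :=
        (((Commute.one_right M).add_right (Commute.refl M)).pow_right _).eq
      rw [Matrix.mulVec_mulVec, hcomm, ← Matrix.mulVec_mulVec, Matrix.mulVec_sub,
        Matrix.mulVec_smul, add_sub_cancel]
    obtain ⟨ν, hrν, hν⟩ := exists_gt_smul_le (μ := r) (w := M *ᵥ (P *ᵥ p)) hPp fun k => by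
      rw [hMP, Pi.add_apply, Pi.smul_apply, smul_eq_mul]
      linarith [hPy k]
    exact (hcw ν _ (fun k => (hPp k).le) (fun h => (hPp i).ne' (congrFun h i)) hν).not_gt hrν
  refine ⟨r, hr, p, fun k => ?_, heig, hcw⟩
  have := hPp k
  rw [one_add_pow_mulVec_of_mulVec_eq_smul heig, Pi.smul_apply, smul_eq_mul] at this
  exact pos_of_mul_pos_right this (by positivity)

theorem MatIrred.exists_pos_mulVec_eq_specRad_smul [Nonempty ι] (hM : ∀ i j, 0 ≤ M i j)
    (hirr : MatIrred M) : ∃ p : ι → ℝ, (∀ k, 0 < p k) ∧ M *ᵥ p = specRad M • p := by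
  obtain ⟨r, hr, p, hp, heig, -⟩ := hirr.exists_perron_root hM
  obtain ⟨i⟩ := ‹Nonempty ι›
  have : specRad M = r := le_antisymm (specRad_le_of_mulVec_le_smul hM hp hr heig.le)
    (le_specRad_of_mulVec_eq_smul hr (fun h => (hp i).ne' (congrFun h i)) heig)
  exact ⟨p, hp, this ▸ heig⟩

theorem MatIrred.lt_specRad_of_lt_mulVec [Nonempty ι] (hM : ∀ i j, 0 ≤ M i j)
    (hirr : MatIrred M) {q : ι → ℝ} (hq : ∀ k, 0 < q k) {μ : ℝ} (h : ∀ k, μ * q k < (M *ᵥ q) k) :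
    μ < specRad M := by
  obtain ⟨r, hr, p, hp, heig, hcw⟩ := hirr.exists_perron_root hM
  obtain ⟨i⟩ := ‹Nonempty ι›
  obtain ⟨ν, hμν, hν⟩ := exists_gt_smul_le hq h
  calc μ < ν := hμν
    _ ≤ r := hcw ν q (fun k => (hq k).le) (fun h => (hq i).ne' (congrFun h i)) hν
    _ ≤ specRad M := le_specRad_of_mulVec_eq_smul hr (fun h => (hp i).ne' (congrFun h i)) heig

end PerronFrobenius

section PowerControl

variable {K N : ℕ} {V : Matrix (Fin K) (Fin K) ℝ} {z γ : Fin K → ℝ}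
  {C : Matrix (Fin N) (Fin K) ℝ} {phat : Fin N → ℝ}

theorem Bmat_apply (n : Fin N) (i j : Fin K) :
    Bmat V z γ C phat n i j = γ i * (V i j + (phat n)⁻¹ * (z i * C n j)) := by
  simp [Bmat, Matrix.diagonal_mul, Matrix.vecMulVec_apply]

theorem Bmat_mulVec_apply (n : Fin N) (p : Fin K → ℝ) (k : Fin K) :
    (Bmat V z γ C phat n *ᵥ p) k = γ k * ((V *ᵥ p) k + z k * gcon C phat n p) := by
  simp only [Bmat, ← Matrix.mulVec_mulVec, Matrix.mulVec_diagonal, Matrix.add_mulVec,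
    Matrix.smul_mulVec, Matrix.vecMulVec_mulVec, gcon, Pi.add_apply, Pi.smul_apply, smul_eq_mul]
  rw [MulOpposite.smul_eq_mul_unop, MulOpposite.unop_op, div_eq_inv_mul]
  simp only [Matrix.mulVec]
  ring

theorem gcon_smul (n : Fin N) (s : ℝ) (p : Fin K → ℝ) :
    gcon C phat n (s • p) = s * gcon C phat n p := by
  rw [gcon, gcon, Matrix.mulVec_smul, Pi.smul_apply, smul_eq_mul, mul_div_assoc]

theorem mem_Pset_iff (hphat : ∀ n, 0 < phat n) {p : Fin K → ℝ} :
    p ∈ Pset C phat ↔ (∀ k, 0 ≤ p k) ∧ ∀ n, gcon C phat n p ≤ 1 := by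
  simp only [Pset, Set.mem_ofPred_eq, gcon, div_le_one (hphat _)]

theorem le_SIR_iff (hV : ∀ i j, 0 ≤ V i j) (hz : ∀ k, 0 < z k) {p : Fin K → ℝ}
    (hp : ∀ k, 0 ≤ p k) (k : Fin K) : γ k ≤ SIR V z p k ↔ γ k * ((V *ᵥ p) k + z k) ≤ p k :=
  le_div_iff₀ (add_pos_of_nonneg_of_pos (mulVec_nonneg_of_nonneg hV hp k) (hz k))

theorem MatIrred.Bmat (hirr : MatIrred V) (hz : ∀ k, 0 < z k) (hγ : ∀ k, 0 < γ k)
    (hC : ∀ n k, 0 ≤ C n k) (hphat : ∀ n, 0 < phat n) (n : Fin N) :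
    MatIrred (Bmat V z γ C phat n) :=
  hirr.mono fun i j hij => by
    rw [Bmat_apply]
    exact mul_pos (hγ i) (add_pos_of_pos_of_nonneg hij
      (mul_nonneg (inv_nonneg.2 (hphat n).le) (mul_nonneg (hz i).le (hC n j))))

variable (hV : ∀ i j, 0 ≤ V i j) (hz : ∀ k, 0 < z k) (hγ : ∀ k, 0 < γ k)
  (hC : ∀ n k, 0 ≤ C n k) (hphat : ∀ n, 0 < phat n)
include hV hz hγ hC hphat

theorem Bmat_nonneg (n : Fin N) (i j : Fin K) : 0 ≤ Bmat V z γ C phat n i j := by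
  rw [Bmat_apply]
  exact mul_nonneg (hγ i).le (add_nonneg (hV i j)
    (mul_nonneg (inv_nonneg.2 (hphat n).le) (mul_nonneg (hz i).le (hC n j))))

theorem specRad_Bmat_le_one {p : Fin K → ℝ} (hp : p ∈ Pset C phat)
    (hSIR : ∀ k, γ k ≤ SIR V z p k) (n : Fin N) : specRad (Bmat V z γ C phat n) ≤ 1 := by
  obtain ⟨hp0, hg⟩ := (mem_Pset_iff hphat).1 hp
  have hSIR' k := (le_SIR_iff hV hz hp0 k).1 (hSIR k)
  have hppos k : 0 < p k := (mul_pos (hγ k)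
    (add_pos_of_nonneg_of_pos (mulVec_nonneg_of_nonneg hV hp0 k) (hz k))).trans_le (hSIR' k)
  refine specRad_le_of_mulVec_le_smul (Bmat_nonneg hV hz hγ hC hphat n) hppos zero_le_one
    fun k => ?_
  rw [one_smul, Bmat_mulVec_apply]
  refine le_trans (mul_le_mul_of_nonneg_left ?_ (hγ k).le) (hSIR' k)
  linarith [mul_le_of_le_one_right (hz k).le (hg n)]

theorem gcon_le_of_specRad_Bmat_le [Nonempty (Fin K)] (hirr : MatIrred V) {n : Fin N}
    (hn : ∀ m, specRad (Bmat V z γ C phat m) ≤ specRad (Bmat V z γ C phat n)) {q : Fin K → ℝ}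
    (hq : ∀ k, 0 < q k) (heig : Bmat V z γ C phat n *ᵥ q = specRad (Bmat V z γ C phat n) • q)
    (m : Fin N) : gcon C phat m q ≤ gcon C phat n q := by
  -- a tighter constraint `m` would give `B⁽ᵐ⁾ q > ρ(B⁽ⁿ⁾) q` entrywise
  by_contra! hlt
  refine (hn m).not_gt ((hirr.Bmat hz hγ hC hphat m).lt_specRad_of_lt_mulVec
    (Bmat_nonneg hV hz hγ hC hphat m) hq fun k => ?_)
  have hk := congrFun heig k
  rw [Bmat_mulVec_apply, Pi.smul_apply, smul_eq_mul] at hk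
  rw [← hk, Bmat_mulVec_apply]
  gcongr
  · exact hγ k
  · exact hz k

theorem exists_feasible_of_specRad_Bmat_le_one [Nonempty (Fin K)] [Nonempty (Fin N)]
    (hCcol : ∀ k, ∃ n, C n k = 1) (hirr : MatIrred V)
    (h : ∀ n, specRad (Bmat V z γ C phat n) ≤ 1) :
    ∃ p ∈ Pset C phat, ∀ k, γ k ≤ SIR V z p k := by
  obtain ⟨n, hn⟩ := Finite.exists_max fun n => specRad (Bmat V z γ C phat n)
  obtain ⟨q, hq, heig⟩ := (hirr.Bmat hz hγ hC hphat n).exists_pos_mulVec_eq_specRad_smul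
    (Bmat_nonneg hV hz hγ hC hphat n)
  have hg := gcon_le_of_specRad_Bmat_le hV hz hγ hC hphat hirr hn hq heig
  have hgpos : 0 < gcon C phat n q := by
    obtain ⟨k⟩ := ‹Nonempty (Fin K)›
    obtain ⟨m, hm⟩ := hCcol k
    refine (div_pos ?_ (hphat m)).trans_le (hg m)
    calc 0 < C m k * q k := by rw [hm, one_mul]; exact hq k
      _ ≤ (C *ᵥ q) m := Finset.single_le_sum (f := fun j => C m j * q j)
          (fun j _ => mul_nonneg (hC m j) (hq j).le) (Finset.mem_univ k)
  set p := (gcon C phat n q)⁻¹ • q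
  have hp0 k : 0 ≤ p k := mul_nonneg (inv_pos.2 hgpos).le (hq k).le
  have hpn : gcon C phat n p = 1 := by rw [gcon_smul, inv_mul_cancel₀ hgpos.ne']
  refine ⟨p, (mem_Pset_iff hphat).2 ⟨hp0, fun m => ?_⟩, fun k => (le_SIR_iff hV hz hp0 k).2 ?_⟩
  · rw [gcon_smul, inv_mul_le_one₀ hgpos]
    exact hg m
  · calc γ k * ((V *ᵥ p) k + z k) = (Bmat V z γ C phat n *ᵥ p) k := by
          rw [Bmat_mulVec_apply, hpn, mul_one]
      _ = specRad (Bmat V z γ C phat n) * p k := by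
          rw [Matrix.mulVec_smul, heig, smul_comm]
          rfl
      _ ≤ p k := mul_le_of_le_one_left (hp0 k) (h n)

end PowerControl

theorem stmt13_general    {K N : ℕ} (hK : 2 ≤ K) (hN : 1 ≤ N)
    (V : Matrix (Fin K) (Fin K) ℝ) (z γ : Fin K → ℝ)
    (C : Matrix (Fin N) (Fin K) ℝ) (phat : Fin N → ℝ)
    (hV : ∀ i j, 0 ≤ V i j)
    (hz : ∀ k, 0 < z k) (hγ : ∀ k, 0 < γ k)
    (hC : ∀ n k, C n k = 0 ∨ C n k = 1) (hCcol : ∀ k, ∃ n, C n k = 1)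
    (hphat : ∀ n, 0 < phat n)
    (hirr : MatIrred V)
 :
    (∃ p ∈ Pset C phat, ∀ k, γ k ≤ SIR V z p k) ↔
      (⨆ n, specRad (Bmat V z γ C phat n)) ≤ 1 := by
  have : Nonempty (Fin K) := ⟨⟨0, by omega⟩⟩
  have : Nonempty (Fin N) := ⟨⟨0, hN⟩⟩
  have hC' : ∀ n k, 0 ≤ C n k := fun n k => by rcases hC n k with h | h <;> simp [h]
  rw [ciSup_le_iff (Set.finite_range _).bddAbove]
  exact ⟨fun ⟨p, hp, hSIR⟩ => specRad_Bmat_le_one hV hz hγ hC' hphat hp hSIR,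
    exists_feasible_of_specRad_Bmat_le_one hV hz hγ hC' hphat hCcol hirr⟩

theorem stmt13    {K N : ℕ} (hK : 2 ≤ K) (hN : 1 ≤ N)
    (V : Matrix (Fin K) (Fin K) ℝ) (z γ : Fin K → ℝ)
    (C : Matrix (Fin N) (Fin K) ℝ) (phat : Fin N → ℝ)
    (hV : ∀ i j, 0 ≤ V i j) (hVdiag : ∀ i, V i i = 0)
    (hz : ∀ k, 0 < z k) (hγ : ∀ k, 0 < γ k)
    (hC : ∀ n k, C n k = 0 ∨ C n k = 1) (hCcol : ∀ k, ∃ n, C n k = 1)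
    (hphat : ∀ n, 0 < phat n)
    (hirr : MatIrred V)
 :
    (∃ p ∈ Pset C phat, ∀ k, γ k ≤ SIR V z p k) ↔
      (⨆ n, specRad (Bmat V z γ C phat n)) ≤ 1 :=
  stmt13_general hK hN V z γ C phat hV hz hγ hC hCcol hphat hirr
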